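/- Let k ≥ 1, π ∈ (0,1), and let (X_n)_{n≥1} be the process T(k,π) with uniform initial distribution ν(u) = 2^{−k} on {0,1}^k. Then for every j ≥ 0 and every word u ∈ {0,1}^k, P(X_{j+1}…X_{j+k} = u) = 2^{−k}; that is, T(k,π) with uniform initial distribution is a k-order two-faced process. The same holds for the process T̄(k,π) defined from t̄_{k,π}. -/
import Mathlib


mutual
/-- `tf0 π u` is the conditional probability `t_{k,π}(0|u)` for the two-faced
process `T(k,π)`, where `k = u.length ≥ 1` (bits: `false = 0`, `true = 1`,
words written with the most recent conditioning bit last, so `0u` is `false :: u`). -/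
noncomputable def tf0 (π : ℝ) : List Bool → ℝ
  | [] => 1 / 2
  | [false] => π
  | [true] => 1 - π
  | false :: b :: u => tf0 π (b :: u)
  | true :: b :: u => tb0 π (b :: u)

/-- `tb0 π u` is `t̄_{k,π}(0|u)` for the process `T̄(k,π)`. -/
noncomputable def tb0 (π : ℝ) : List Bool → ℝ
  | [] => 1 / 2
  | [false] => 1 - π
  | [true] => π
  | false :: b :: u => tb0 π (b :: u)
  | true :: b :: u => tf0 π (b :: u)
end

/-- `tface π w u = t_{k,π}(w|u)`, using `t(1|u) = 1 - t(0|u)`. -/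
noncomputable def tface (π : ℝ) (w : Bool) (u : List Bool) : ℝ :=
  if w then 1 - tf0 π u else tf0 π u

/-- `tbarface π w u = t̄_{k,π}(w|u)`. -/
noncomputable def tbarface (π : ℝ) (w : Bool) (u : List Bool) : ℝ :=
  if w then 1 - tb0 π u else tb0 π u

/-- XOR of the bits of a binary word. -/
def xorWord (u : List Bool) : Bool := u.foldl xor false

lemma tf0_add_tb0 (π : ℝ) : ∀ v : List Bool, tf0 π v + tb0 π v = 1
  | [] => by simp [tf0, tb0]; norm_num
  | [false] => by simp [tf0, tb0]
  | [true] => by simp [tf0, tb0]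
  | false :: b :: u => by simp only [tf0, tb0]; exact tf0_add_tb0 π (b :: u)
  | true :: b :: u => by simp only [tf0, tb0]; rw [add_comm]; exact tf0_add_tb0 π (b :: u)

lemma tf0_cons_sum (π : ℝ) (v : List Bool) :
    tf0 π (false :: v) + tf0 π (true :: v) = 1 := by
  match v with
  | [] => simp [tf0]
  | b :: u => simp only [tf0]; exact tf0_add_tb0 π (b :: u)

lemma tb0_cons_sum (π : ℝ) (v : List Bool) :
    tb0 π (false :: v) + tb0 π (true :: v) = 1 := by
  match v with
  | [] => simp [tb0]
  | b :: u => simp only [tb0]; rw [add_comm]; exact tf0_add_tb0 π (b :: u)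

lemma kappa_sum (π : ℝ) (κ : Bool → List Bool → ℝ) (hκ : κ = tface π ∨ κ = tbarface π)
    (w : Bool) (v : List Bool) : κ w (false :: v) + κ w (true :: v) = 1 := by
  rcases hκ with rfl | rfl <;> cases w <;>
    simp only [tface, tbarface, if_true, Bool.false_eq_true, if_false] <;>
    linarith [tf0_cons_sum π v, tb0_cons_sum π v]

lemma prod_peel (κ : Bool → List Bool → ℝ) (k : ℕ) (hk : 1 ≤ k) (b : Bool)
    (z : List Bool) (hz : k ≤ z.length) :
    ∏ i ∈ Finset.Ico k (z.length + 1), κ ((b :: z).getD i false) (((b :: z).drop (i - k)).take k)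
      = κ (z.getD (k - 1) false) (b :: z.take (k - 1)) *
        ∏ i ∈ Finset.Ico k z.length, κ (z.getD i false) ((z.drop (i - k)).take k) := by
  obtain ⟨m, rfl⟩ : ∃ m, k = m + 1 := ⟨k - 1, by omega⟩
  rw [Finset.prod_eq_prod_Ico_succ_bot (by omega)]
  congr 1
  · simp
  · have h1 : ∏ i ∈ Finset.Ico (m + 1) z.length,
        κ (z.getD i false) ((z.drop (i - (m + 1))).take (m + 1))
        = ∏ i ∈ Finset.Ico (m + 1 + 1) (z.length + 1),
            κ (z.getD (i - 1) false) ((z.drop (i - 1 - (m + 1))).take (m + 1)) := by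
      rw [← Finset.prod_Ico_add']
      refine Finset.prod_congr rfl fun i hi => by norm_num
    rw [h1]
    refine Finset.prod_congr rfl fun i hi => ?_
    simp only [Finset.mem_Ico] at hi
    obtain ⟨m', rfl⟩ : ∃ m', i = m' + 1 := ⟨i - 1, by omega⟩
    have e : m' + 1 - (m + 1) = (m' - (m + 1)) + 1 := by omega
    simp only [List.getD_cons_succ, e, List.drop_succ_cons, Nat.add_sub_cancel]

open MeasureTheory ProbabilityTheory Filter

/-- the process `T(k,π)` (or `T̄(k,π)`) with uniform initial distribution
`ν(u) = 2^{-k}` on `{0,1}^k` is a `k`-order two-faced process: for every `j ≥ 0` and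
every word `u ∈ {0,1}^k`, `P(X_{j+1}…X_{j+k} = u) = 2^{-k}`.
The process hypothesis `hproc` says that for every `n ≥ k` and every word
`x = x_1…x_n ∈ {0,1}^n`,
`P(X_1…X_n = x) = 2^{-k} · ∏_{i=k+1}^{n} t_{k,π}(x_i | x_{i-k}…x_{i-1})`. -/
theorem two_faced_uniform_blocks {Ω : Type*} [MeasurableSpace Ω]
    (P : Measure Ω) [IsProbabilityMeasure P]
    (k : ℕ) (hk : 1 ≤ k) (π : ℝ) (hπ : π ∈ Set.Ioo (0 : ℝ) 1)
    (κ : Bool → List Bool → ℝ) (hκ : κ = tface π ∨ κ = tbarface π)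
    (X : ℕ → Ω → Bool) (hX : ∀ n, Measurable (X n))
    (hproc : ∀ x : List Bool, k ≤ x.length →
      (P {ω | ∀ i, i < x.length → X (1 + i) ω = x.getD i false}).toReal =
        ((2 : ℝ) ^ k)⁻¹ *
          ∏ j ∈ Finset.Ico k x.length, κ (x.getD j false) ((x.drop (j - k)).take k)) :
    ∀ (j : ℕ) (u : List Bool), u.length = k →
      (P {ω | ∀ i, i < k → X (j + 1 + i) ω = u.getD i false}).toReal =
        ((2 : ℝ) ^ k)⁻¹ := by
  have hmeas : ∀ (c : ℕ) (v : List Bool),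
      MeasurableSet {ω | ∀ i, i < v.length → X (c + i) ω = v.getD i false} := by
    intro c v
    have h0 : {ω | ∀ i, i < v.length → X (c + i) ω = v.getD i false}
        = ⋂ i, {ω | i < v.length → X (c + i) ω = v.getD i false} := by
      ext ω; simp
    rw [h0]
    refine MeasurableSet.iInter fun i => ?_
    by_cases h : i < v.length
    · have h1 : {ω | i < v.length → X (c + i) ω = v.getD i false}
          = X (c + i) ⁻¹' {v.getD i false} := by ext ω; simp [h]
      rw [h1]; exact (hX (c + i)) (measurableSet_singleton _)
    · have h1 : {ω | i < v.length → X (c + i) ω = v.getD i false} = Set.univ := by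
        ext ω; simp [h]
      rw [h1]; exact MeasurableSet.univ
  have key : ∀ (j : ℕ) (v : List Bool), k ≤ v.length →
      (P {ω | ∀ i, i < v.length → X (j + 1 + i) ω = v.getD i false}).toReal =
        ((2 : ℝ) ^ k)⁻¹ *
          ∏ i ∈ Finset.Ico k v.length, κ (v.getD i false) ((v.drop (i - k)).take k) := by
    intro j
    induction j with
    | zero =>
      intro v hv
      simpa using hproc v hv
    | succ j ih =>
      intro v hv
      have hset : {ω | ∀ i, i < v.length → X (j + 1 + 1 + i) ω = v.getD i false}
          = {ω | ∀ i, i < (false :: v).length → X (j + 1 + i) ω = (false :: v).getD i false}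
          ∪ {ω | ∀ i, i < (true :: v).length → X (j + 1 + i) ω = (true :: v).getD i false} := by
        ext ω
        simp only [Set.mem_setOf_eq, Set.mem_union, List.length_cons]
        constructor
        · intro h
          have main : ∀ b : Bool, X (j + 1) ω = b →
              ∀ i, i < v.length + 1 → X (j + 1 + i) ω = (b :: v).getD i false := by
            intro b hb i hi
            cases i with
            | zero => simpa using hb
            | succ i =>
              have e : j + 1 + (i + 1) = j + 1 + 1 + i := by omega
              rw [e]
              simpa using h i (by omega)
          cases hb : X (j + 1) ω
          · exact Or.inl (main false hb)
          · exact Or.inr (main true hb)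
        · rintro (h | h) <;>
          · intro i hi
            have e : j + 1 + 1 + i = j + 1 + (i + 1) := by omega
            rw [e]
            simpa using h (i + 1) (by omega)
      have hdisj : Disjoint
          {ω | ∀ i, i < (false :: v).length → X (j + 1 + i) ω = (false :: v).getD i false}
          {ω | ∀ i, i < (true :: v).length → X (j + 1 + i) ω = (true :: v).getD i false} := by
        rw [Set.disjoint_left]
        intro ω h1 h2
        have e1 := h1 0 (by simp)
        have e2 := h2 0 (by simp)
        simp only [Nat.add_zero, List.getD_cons_zero] at e1 e2
        simp [e1] at e2
      rw [hset, measure_union hdisj (hmeas (j + 1) (true :: v)),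
        ENNReal.toReal_add (measure_ne_top P _) (measure_ne_top P _),
        ih (false :: v) (by simp; omega), ih (true :: v) (by simp; omega)]
      simp only [List.length_cons]
      rw [prod_peel κ k hk false v hv, prod_peel κ k hk true v hv]
      have h1 := kappa_sum π κ hκ (v.getD (k - 1) false) (v.take (k - 1))
      linear_combination (((2 : ℝ) ^ k)⁻¹ *
        ∏ i ∈ Finset.Ico k v.length, κ (v.getD i false) ((v.drop (i - k)).take k)) * h1
  intro j u hu
  have h := key j u (le_of_eq hu.symm)
  rw [hu] at h
  simpa using h
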